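/- arXiv:2602.10962 — 3 statements merged into one kernel-verified Lean document; each statement's English description precedes it below -/
import Mathlib

section
/- For Hermitian positive definite matrices A and B of order n, if U is unitary with U*BU = diag(b_1,...,b_n) and U*AU = [c_ij], then the Fréchet derivative of the matrix logarithm at B in direction A satisfies Dlog[B](A) = U [c_ij (log b_i - log b_j)/(b_i - b_j)] U*, where the quotient is interpreted as 1/b_i when b_i = b_j. -/
open Matrix Filter
open scoped ComplexOrder

/-- The matrix logarithm of a Hermitian matrix, via the continuous functional calculus. -/
noncomputable def mlog {n : ℕ} (A : Matrix (Fin n) (Fin n) ℂ) : Matrix (Fin n) (Fin n) ℂ :=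
  cfc Real.log A

/-- The divided difference of `Real.log`, interpreted as `1/b` on the diagonal. -/
noncomputable def logDD (a b : ℝ) : ℝ :=
  if a = b then a⁻¹ else (Real.log a - Real.log b) / (a - b)

/-!
For `x > 0` one has `log x = ∫₀^∞ ((1 + s)⁻¹ - (x + s)⁻¹) ds`, so in an eigenbasis of a positive
definite `X`, `log X = ∫₀^∞ ((1 + s)⁻¹ - (X + s)⁻¹) ds`. The resolvent identity turns the
difference quotient into `t⁻¹ (log (B + tA) - log B) = ∫₀^∞ (B + s)⁻¹ A (B + tA + s)⁻¹ ds`.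
For small `|t|` we have `B + tA ≥ δ/2`, which bounds the entries of `(B + tA + s)⁻¹` by
`(δ/2 + s)⁻¹`; dominated convergence lets `t → 0` under the integral. In the eigenbasis `U` of `B`,
the limit `∫₀^∞ (B + s)⁻¹ A (B + s)⁻¹ ds` has entries
`c_ij ∫₀^∞ ((b_i + s)(b_j + s))⁻¹ ds = c_ij logDD b_i b_j`.
-/

open MeasureTheory Topology
open Set (Ioi Ici)
open scoped MatrixOrder

lemma logDD_mul_sub (a b : ℝ) : logDD a b * (a - b) = Real.log a - Real.log b := by
  unfold logDD
  split_ifs with h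
  · simp [h]
  · field_simp [sub_ne_zero.mpr h]

lemma hasDerivAt_logDD_add {a c s : ℝ} (ha : 0 < a + s) (hc : 0 < c + s) :
    HasDerivAt (fun s => logDD (a + s) (c + s)) (-((a + s) * (c + s))⁻¹) s := by
  have hid (x : ℝ) : HasDerivAt (fun s => x + s) 1 s := (hasDerivAt_id s).const_add x
  rcases eq_or_ne a c with rfl | hac
  · simp only [logDD, if_true]
    refine ((hid a).inv ha.ne').congr_deriv ?_
    field_simp
  · have hne (s : ℝ) : a + s ≠ c + s := by simpa using hac
    simp only [logDD, hne, if_false, add_sub_add_right_eq_sub]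
    refine ((((hid a).log ha.ne').sub ((hid c).log hc.ne')).div_const (a - c)).congr_deriv ?_
    field_simp [sub_ne_zero.mpr hac]
    ring

lemma tendsto_logDD_add_atTop (a c : ℝ) :
    Tendsto (fun s => logDD (a + s) (c + s)) atTop (𝓝 0) := by
  rcases eq_or_ne a c with rfl | hac
  · simpa [logDD, Function.comp_def] using
      tendsto_inv_atTop_zero.comp (tendsto_atTop_add_const_left _ a tendsto_id)
  · have hne (s : ℝ) : a + s ≠ c + s := by simpa using hac
    simp only [logDD, hne, if_false, add_sub_add_right_eq_sub]
    have := (Real.tendsto_log_comp_add_sub_log a).sub (Real.tendsto_log_comp_add_sub_log c)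
    simpa [add_comm] using this.div_const (a - c)

lemma hasDerivAt_neg_logDD_add {a c : ℝ} (ha : 0 < a) (hc : 0 < c) :
    ∀ s ∈ Ici (0 : ℝ), HasDerivAt (fun s => -logDD (a + s) (c + s)) ((a + s) * (c + s))⁻¹ s :=
  fun s hs => by
    have hs : 0 ≤ s := hs
    exact (hasDerivAt_logDD_add (by linarith) (by linarith)).neg.congr_deriv (neg_neg _)

lemma integrableOn_inv_mul_add_mul_add {a c : ℝ} (ha : 0 < a) (hc : 0 < c) :
    IntegrableOn (fun s => ((a + s) * (c + s))⁻¹) (Ioi 0) :=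
  integrableOn_Ioi_deriv_of_nonneg' (hasDerivAt_neg_logDD_add ha hc)
    (fun s hs => by have := Set.mem_Ioi.mp hs; positivity) (tendsto_logDD_add_atTop a c).neg

lemma integral_inv_mul_add_mul_add {a c : ℝ} (ha : 0 < a) (hc : 0 < c) :
    ∫ s in Ioi 0, ((a + s) * (c + s))⁻¹ = logDD a c := by
  rw [integral_Ioi_of_hasDerivAt_of_nonneg' (hasDerivAt_neg_logDD_add ha hc)
    (fun s hs => by have := Set.mem_Ioi.mp hs; positivity) (tendsto_logDD_add_atTop a c).neg]
  simp

lemma inv_one_add_sub_inv_add {x s : ℝ} (hx : 0 < x) (hs : 0 < s) :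
    (1 + s)⁻¹ - (x + s)⁻¹ = (x - 1) * ((1 + s) * (x + s))⁻¹ := by
  field_simp
  ring

lemma integrableOn_inv_one_add_sub_inv_add {x : ℝ} (hx : 0 < x) :
    IntegrableOn (fun s => (1 + s)⁻¹ - (x + s)⁻¹) (Ioi 0) :=
  IntegrableOn.congr_fun ((integrableOn_inv_mul_add_mul_add one_pos hx).const_mul (x - 1))
    (fun _ hs => (inv_one_add_sub_inv_add hx hs).symm) measurableSet_Ioi

lemma integral_inv_one_add_sub_inv_add {x : ℝ} (hx : 0 < x) :
    ∫ s in Ioi 0, ((1 + s)⁻¹ - (x + s)⁻¹) = Real.log x := by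
  rw [setIntegral_congr_fun measurableSet_Ioi fun _ hs => inv_one_add_sub_inv_add hx hs,
    integral_const_mul, integral_inv_mul_add_mul_add one_pos hx]
  linarith [logDD_mul_sub 1 x, Real.log_one]

section

variable {ι : Type*} [Fintype ι] {X : Type*} [MeasurableSpace X] {μ : Measure X}

lemma mul_mul_apply_eq_sum (V M W : Matrix ι ι ℂ) (i j : ι) :
    (V * M * W) i j = ∑ k, ∑ l, V i k * W l j * M k l := by
  simp only [mul_apply, Finset.sum_mul]
  rw [Finset.sum_comm]
  exact Finset.sum_congr rfl fun _ _ => Finset.sum_congr rfl fun _ _ => by ring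

lemma norm_mul_mul_apply_le {P A Q : Matrix ι ι ℂ} {p q : ℝ} (hP : ∀ i j, ‖P i j‖ ≤ p)
    (hQ : ∀ i j, ‖Q i j‖ ≤ q) (i j : ι) :
    ‖(P * A * Q) i j‖ ≤ (∑ k, ∑ l, ‖A k l‖) * (p * q) := by
  rw [mul_mul_apply_eq_sum, Finset.sum_mul]
  refine (norm_sum_le _ _).trans (Finset.sum_le_sum fun k _ => ?_)
  rw [Finset.sum_mul]
  refine (norm_sum_le _ _).trans (Finset.sum_le_sum fun l _ => ?_)
  rw [norm_mul, norm_mul, mul_comm _ ‖A k l‖]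
  gcongr
  exacts [(norm_nonneg _).trans (hP i k), hP i k, hQ l j]

lemma integrable_mul_mul_apply {M : X → Matrix ι ι ℂ}
    (hM : ∀ k l, Integrable (fun x => M x k l) μ) (V W : Matrix ι ι ℂ) (i j : ι) :
    Integrable (fun x => (V * M x * W) i j) μ := by
  simp only [mul_mul_apply_eq_sum]
  exact integrable_finsetSum _ fun k _ => integrable_finsetSum _ fun l _ => (hM k l).const_mul _

lemma integral_mul_mul_apply {M : X → Matrix ι ι ℂ}
    (hM : ∀ k l, Integrable (fun x => M x k l) μ) (V W : Matrix ι ι ℂ) (i j : ι) :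
    ∫ x, (V * M x * W) i j ∂μ = (V * Matrix.of (fun k l => ∫ x, M x k l ∂μ) * W) i j := by
  simp only [mul_mul_apply_eq_sum]
  rw [integral_finsetSum _ fun k _ => integrable_finsetSum _ fun l _ => (hM k l).const_mul _]
  refine Finset.sum_congr rfl fun k _ => ?_
  rw [integral_finsetSum _ fun l _ => (hM k l).const_mul _]
  exact Finset.sum_congr rfl fun l _ => integral_const_mul _ _

end

section

variable {ι : Type*} [DecidableEq ι] {X : Type*} [MeasurableSpace X] {μ : Measure X}

lemma integrable_diagonal_apply {f : X → ι → ℂ} (hf : ∀ k, Integrable (fun x => f x k) μ)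
    (k l : ι) : Integrable (fun x => diagonal (f x) k l) μ := by
  simp only [diagonal_apply]
  split_ifs with h
  · exact hf k
  · exact integrable_zero _ _ _

lemma of_integral_diagonal_apply (f : X → ι → ℂ) :
    Matrix.of (fun k l => ∫ x, diagonal (f x) k l ∂μ) = diagonal fun k => ∫ x, f x k ∂μ := by
  ext k l
  simp only [of_apply, diagonal_apply]
  split_ifs <;> simp

lemma Matrix.PosDef.of_smul_one_le {M : Matrix ι ι ℂ} {c : ℝ} (hc : 0 < c) (h : c • 1 ≤ M) :
    M.PosDef := by
  simpa using (PosDef.one.smul hc).posSemidef_add (le_iff.mp h)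

lemma Matrix.PosDef.add_smul_one {M : Matrix ι ι ℂ} (hM : M.PosDef) {s : ℝ} (hs : 0 ≤ s) :
    (M + s • 1).PosDef :=
  hM.add_posSemidef (PosSemidef.one.smul hs)

lemma smul_one_add_le_add_smul_one {M : Matrix ι ι ℂ} {c : ℝ} (h : c • 1 ≤ M) (s : ℝ) :
    (c + s) • 1 ≤ M + s • 1 := by
  rw [add_smul]
  exact add_le_add_left h _

end

section

variable {ι : Type*} [Fintype ι] [DecidableEq ι]

lemma mul_mul_star_inv {α : Type*} [CommRing α] [StarRing α] {V : Matrix ι ι α}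
    (hV : V ∈ unitaryGroup ι α) (M : Matrix ι ι α) : (V * M * star V)⁻¹ = V * M⁻¹ * star V := by
  rw [Matrix.mul_inv_rev, Matrix.mul_inv_rev, inv_eq_left_inv (mem_unitaryGroup_iff.mp hV),
    inv_eq_left_inv (mem_unitaryGroup_iff'.mp hV), Matrix.mul_assoc]

lemma eq_mul_mul_star_of_star_mul_mul_eq {α : Type*} [CommRing α] [StarRing α]
    {V M N : Matrix ι ι α} (hV : V ∈ unitaryGroup ι α) (h : star V * M * V = N) :
    M = V * N * star V := by
  rw [← h]
  simp only [Matrix.mul_assoc, mem_unitaryGroup_iff.mp hV, Matrix.mul_one]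
  rw [← Matrix.mul_assoc, mem_unitaryGroup_iff.mp hV, Matrix.one_mul]

lemma pos_of_star_mul_mul_eq_diagonal {V M : Matrix ι ι ℂ} (hV : V ∈ unitaryGroup ι ℂ)
    (hM : M.PosDef) {d : ι → ℝ} (h : star V * M * V = diagonal (fun k => (d k : ℂ))) (k : ι) :
    0 < d k := by
  have hconj := (IsUnit.posDef_star_left_conjugate_iff (Unitary.isUnit_coe (U := ⟨V, hV⟩))).mpr hM
  rw [h, posDef_diagonal_iff] at hconj
  exact_mod_cast hconj k

lemma mul_mul_star_mul_mul_mul_star {V : Matrix ι ι ℂ} (hV : V ∈ unitaryGroup ι ℂ)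
    (P Q : Matrix ι ι ℂ) : V * P * star V * (V * Q * star V) = V * (P * Q) * star V := by
  simp only [Matrix.mul_assoc]
  rw [← Matrix.mul_assoc (star V), mem_unitaryGroup_iff'.mp hV, Matrix.one_mul]

lemma smul_one_eq_mul_mul_star {V : Matrix ι ι ℂ} (hV : V ∈ unitaryGroup ι ℂ) (c : ℝ) :
    c • (1 : Matrix ι ι ℂ) = V * diagonal (fun _ => (c : ℂ)) * star V := by
  rw [← smul_one_eq_diagonal, Matrix.mul_smul, Matrix.mul_one, Matrix.smul_mul,
    mem_unitaryGroup_iff.mp hV, Complex.coe_smul]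

lemma mul_diagonal_mul_star_add_smul_one {V : Matrix ι ι ℂ} (hV : V ∈ unitaryGroup ι ℂ)
    (d : ι → ℂ) (c : ℝ) :
    V * diagonal d * star V + c • 1 = V * diagonal (fun k => d k + c) * star V := by
  rw [smul_one_eq_mul_mul_star hV, ← Matrix.add_mul, ← Matrix.mul_add, diagonal_add]

lemma inv_mul_diagonal_mul_star_add_smul_one {V : Matrix ι ι ℂ} (hV : V ∈ unitaryGroup ι ℂ)
    {d : ι → ℂ} {s : ℝ} (hd : ∀ k, d k + s ≠ 0) :
    (V * diagonal d * star V + s • 1)⁻¹ = V * diagonal (fun k => (d k + s)⁻¹) * star V := by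
  rw [mul_diagonal_mul_star_add_smul_one hV, mul_mul_star_inv hV]
  congr 2
  refine inv_eq_left_inv ?_
  simp [hd]

lemma smul_one_le_mul_diagonal_mul_star {V : Matrix ι ι ℂ} (hV : V ∈ unitaryGroup ι ℂ)
    {d : ι → ℝ} {c : ℝ} (hd : ∀ k, c ≤ d k) :
    c • 1 ≤ V * diagonal (fun k => (d k : ℂ)) * star V := by
  have hdiag : (diagonal fun k => ((d k - c : ℝ) : ℂ)).PosSemidef :=
    PosSemidef.diagonal fun k => Complex.zero_le_real.mpr (sub_nonneg.mpr (hd k))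
  rw [le_iff, sub_eq_add_neg, ← neg_smul, mul_diagonal_mul_star_add_smul_one hV]
  simpa [sub_eq_add_neg, star_eq_conjTranspose] using hdiag.mul_mul_conjTranspose_same V

lemma Matrix.IsHermitian.eq_mul_diagonal_mul_star {X : Matrix ι ι ℂ} (hX : X.IsHermitian) :
    X = (hX.eigenvectorUnitary : Matrix ι ι ℂ) * diagonal (fun k => (hX.eigenvalues k : ℂ)) *
      star (hX.eigenvectorUnitary : Matrix ι ι ℂ) := by
  conv_lhs => rw [hX.spectral_theorem, Unitary.conjStarAlgAut_apply]
  rfl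

lemma Matrix.IsHermitian.cfc_eq_mul_diagonal_mul_star {X : Matrix ι ι ℂ} (hX : X.IsHermitian)
    (f : ℝ → ℝ) :
    cfc f X = (hX.eigenvectorUnitary : Matrix ι ι ℂ) *
      diagonal (fun k => (f (hX.eigenvalues k) : ℂ)) *
      star (hX.eigenvectorUnitary : Matrix ι ι ℂ) := by
  rw [hX.cfc_eq, IsHermitian.cfc, Unitary.conjStarAlgAut_apply]
  rfl

lemma eventually_smul_one_le_add_smul {A B : Matrix ι ι ℂ} (hA : A.IsHermitian) {c δ : ℝ}
    (hB : δ • 1 ≤ B) (hc : c < δ) : ∀ᶠ t in 𝓝 (0 : ℝ), c • 1 ≤ B + t • A := by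
  have hsmul (t : ℝ) : t • A = (hA.eigenvectorUnitary : Matrix ι ι ℂ) *
      diagonal (fun k => ((t * hA.eigenvalues k : ℝ) : ℂ)) *
      star (hA.eigenvectorUnitary : Matrix ι ι ℂ) := by
    conv_lhs => rw [hA.eq_mul_diagonal_mul_star]
    rw [← Matrix.smul_mul, ← Matrix.mul_smul, ← diagonal_smul]
    push_cast
    rfl
  have hsmall : ∀ᶠ t in 𝓝 (0 : ℝ), ∀ k, c - δ ≤ t * hA.eigenvalues k := by
    refine Filter.eventually_all.mpr fun k => ?_
    have : Tendsto (fun t : ℝ => t * hA.eigenvalues k) (𝓝 0) (𝓝 0) := by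
      simpa using (tendsto_id (x := 𝓝 (0 : ℝ))).mul_const (hA.eigenvalues k)
    exact this.eventually (eventually_ge_nhds (sub_neg.mpr hc))
  filter_upwards [hsmall] with t ht
  have := add_le_add hB (hsmul t ▸ smul_one_le_mul_diagonal_mul_star hA.eigenvectorUnitary.2 ht)
  rwa [← add_smul, add_sub_cancel] at this

lemma norm_inv_apply_le_of_smul_one_le {M : Matrix ι ι ℂ} {c : ℝ} (hc : 0 < c) (h : c • 1 ≤ M)
    (i j : ι) : ‖M⁻¹ i j‖ ≤ c⁻¹ := by
  have hdet : IsUnit M.det := (isUnit_iff_isUnit_det M).mp (PosDef.of_smul_one_le hc h).isUnit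
  set x := M⁻¹ *ᵥ Pi.single j 1
  have hMx : M *ᵥ x = Pi.single j 1 := by
    rw [mulVec_mulVec, mul_nonsing_inv _ hdet, one_mulVec]
  have hsq (k : ι) : ‖x k‖ ^ 2 ≤ ∑ l, ‖x l‖ ^ 2 :=
    Finset.single_le_sum (f := fun l => ‖x l‖ ^ 2) (fun _ _ => by positivity) (Finset.mem_univ k)
  -- `M - c • 1 ≥ 0` evaluated at `x = M⁻¹ eⱼ` gives `c ‖x‖² ≤ Re (conj xⱼ)`.
  have hform : c * ∑ l, ‖x l‖ ^ 2 ≤ ‖x j‖ := by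
    have h0 := (le_iff.mp h).dotProduct_mulVec_nonneg x
    rw [sub_mulVec, hMx, smul_mulVec, one_mulVec, dotProduct_sub, dotProduct_smul,
      dotProduct_single, mul_one] at h0
    have hself : star x ⬝ᵥ x = ((∑ l, ‖x l‖ ^ 2 : ℝ) : ℂ) := by
      simp [dotProduct, Complex.conj_mul']
    rw [hself] at h0
    have hre := (Complex.nonneg_iff.mp h0).1
    simp only [Complex.sub_re, Complex.real_smul, Complex.re_ofReal_mul,
      Complex.ofReal_re] at hre
    have hxj : (star x j).re ≤ ‖x j‖ := by simpa using Complex.re_le_norm (star (x j))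
    linarith
  have hcS (k : ι) : c * ‖x k‖ ^ 2 ≤ ‖x j‖ :=
    (mul_le_mul_of_nonneg_left (hsq k) hc.le).trans hform
  have hj : ‖x j‖ * c ≤ 1 := by
    have : (‖x j‖ * c) ^ 2 ≤ ‖x j‖ * c := by nlinarith [hcS j]
    nlinarith [norm_nonneg (x j)]
  have hxi : x i = M⁻¹ i j := by simp [x, mulVec_single]
  rw [← hxi, ← one_div, le_div_iff₀ hc]
  have : (‖x i‖ * c) ^ 2 ≤ 1 := by nlinarith [hcS i]
  nlinarith [norm_nonneg (x i)]

lemma continuousAt_inv_of_isUnit {M : Matrix ι ι ℂ} (hM : IsUnit M) :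
    ContinuousAt Inv.inv M := by
  refine continuousAt_matrix_inv M ?_
  rw [Ring.inverse_eq_inv']
  exact continuousAt_inv₀ ((isUnit_iff_isUnit_det M).mp hM).ne_zero

end

section

variable {ι : Type*} [Fintype ι] [DecidableEq ι] {X : Matrix ι ι ℂ}

lemma inv_one_add_smul_one_sub_inv_add_smul_one (hX : X.PosDef) {s : ℝ} (hs : 0 ≤ s) :
    (1 + s)⁻¹ • 1 - (X + s • 1)⁻¹ = (hX.1.eigenvectorUnitary : Matrix ι ι ℂ) *
      diagonal (fun k => (((1 + s)⁻¹ - (hX.1.eigenvalues k + s)⁻¹ : ℝ) : ℂ)) *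
      star (hX.1.eigenvectorUnitary : Matrix ι ι ℂ) := by
  have hV := hX.1.eigenvectorUnitary.2
  have hpos (k : ι) : ((hX.1.eigenvalues k : ℂ) + s) ≠ 0 := by
    exact_mod_cast (add_pos_of_pos_of_nonneg (hX.eigenvalues_pos k) hs).ne'
  conv_lhs => rw [hX.1.eq_mul_diagonal_mul_star, inv_mul_diagonal_mul_star_add_smul_one hV hpos,
    smul_one_eq_mul_mul_star hV, ← Matrix.sub_mul, ← Matrix.mul_sub, diagonal_sub]
  push_cast
  rfl

lemma integrableOn_inv_one_add_sub_inv_eigenvalues_add (hX : X.PosDef) (k : ι) :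
    IntegrableOn (fun s : ℝ => (((1 + s)⁻¹ - (hX.1.eigenvalues k + s)⁻¹ : ℝ) : ℂ)) (Ioi 0) :=
  (integrableOn_inv_one_add_sub_inv_add (hX.eigenvalues_pos k)).ofReal

lemma eqOn_inv_one_add_smul_one_sub_inv_add_smul_one_apply (hX : X.PosDef) (i j : ι) :
    Set.EqOn (fun s : ℝ => ((hX.1.eigenvectorUnitary : Matrix ι ι ℂ) *
      diagonal (fun k => (((1 + s)⁻¹ - (hX.1.eigenvalues k + s)⁻¹ : ℝ) : ℂ)) *
      star (hX.1.eigenvectorUnitary : Matrix ι ι ℂ)) i j)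
      (fun s : ℝ => ((1 + s)⁻¹ • 1 - (X + s • 1)⁻¹) i j) (Ioi 0) := fun _ hs =>
  (congrFun₂ (inv_one_add_smul_one_sub_inv_add_smul_one hX (Set.mem_Ioi.mp hs).le) i j).symm

lemma integrableOn_inv_one_add_smul_one_sub_inv_add_smul_one_apply (hX : X.PosDef) (i j : ι) :
    IntegrableOn (fun s : ℝ => ((1 + s)⁻¹ • 1 - (X + s • 1)⁻¹) i j) (Ioi 0) :=
  IntegrableOn.congr_fun (integrable_mul_mul_apply
    (integrable_diagonal_apply (integrableOn_inv_one_add_sub_inv_eigenvalues_add hX)) _ _ i j)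
    (eqOn_inv_one_add_smul_one_sub_inv_add_smul_one_apply hX i j) measurableSet_Ioi

lemma cfc_log_apply_eq_integral (hX : X.PosDef) (i j : ι) :
    cfc Real.log X i j = ∫ s in Ioi (0 : ℝ), ((1 + s)⁻¹ • 1 - (X + s • 1)⁻¹) i j := by
  rw [← setIntegral_congr_fun measurableSet_Ioi
    (eqOn_inv_one_add_smul_one_sub_inv_add_smul_one_apply hX i j), integral_mul_mul_apply
    (integrable_diagonal_apply (integrableOn_inv_one_add_sub_inv_eigenvalues_add hX)),
    of_integral_diagonal_apply, hX.1.cfc_eq_mul_diagonal_mul_star]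
  simp only [integral_complex_ofReal, integral_inv_one_add_sub_inv_add (hX.eigenvalues_pos _)]

lemma cfc_log_sub_cfc_log_apply {Y : Matrix ι ι ℂ} (hX : X.PosDef) (hY : Y.PosDef) (i j : ι) :
    (cfc Real.log X - cfc Real.log Y) i j =
      ∫ s in Ioi (0 : ℝ), ((Y + s • 1)⁻¹ * (X - Y) * (X + s • 1)⁻¹) i j := by
  rw [Matrix.sub_apply, cfc_log_apply_eq_integral hX, cfc_log_apply_eq_integral hY,
    ← integral_sub (integrableOn_inv_one_add_smul_one_sub_inv_add_smul_one_apply hX i j)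
    (integrableOn_inv_one_add_smul_one_sub_inv_add_smul_one_apply hY i j)]
  refine setIntegral_congr_fun measurableSet_Ioi fun s hs => ?_
  have hs : 0 ≤ s := (Set.mem_Ioi.mp hs).le
  have hunit : IsUnit (Y + s • 1) ↔ IsUnit (X + s • 1) :=
    iff_of_true (hY.add_smul_one hs).isUnit (hX.add_smul_one hs).isUnit
  simp only [← Matrix.sub_apply, sub_sub_sub_cancel_left, inv_sub_inv hunit,
    add_sub_add_right_eq_sub]

lemma inv_smul_cfc_log_add_smul_sub_cfc_log_apply {A B : Matrix ι ι ℂ} {t : ℝ}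
    (hBA : (B + t • A).PosDef) (hB : B.PosDef) (ht : t ≠ 0) (i j : ι) :
    (t⁻¹ • (cfc Real.log (B + t • A) - cfc Real.log B)) i j =
      ∫ s in Ioi (0 : ℝ), ((B + s • 1)⁻¹ * A * (B + t • A + s • 1)⁻¹) i j := by
  rw [Matrix.smul_apply, cfc_log_sub_cfc_log_apply hBA hB, add_sub_cancel_left]
  simp only [Matrix.mul_smul, Matrix.smul_mul, Matrix.smul_apply, integral_smul]
  exact inv_smul_smul₀ ht _

end

section

variable {ι : Type*} [Fintype ι] [DecidableEq ι]

lemma tendsto_integral_inv_mul_mul_inv_apply {A B : Matrix ι ι ℂ} {c : ℝ} (hc : 0 < c)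
    (h : ∀ᶠ t in 𝓝 (0 : ℝ), c • 1 ≤ B + t • A) (i j : ι) :
    Tendsto (fun t : ℝ => ∫ s in Ioi (0 : ℝ), ((B + s • 1)⁻¹ * A * (B + t • A + s • 1)⁻¹) i j)
      (𝓝 0) (𝓝 (∫ s in Ioi (0 : ℝ), ((B + s • 1)⁻¹ * A * (B + s • 1)⁻¹) i j)) := by
  have hB : c • 1 ≤ B := by simpa using h.self_of_nhds
  have hpos {s : ℝ} (hs : 0 ≤ s) : 0 < c + s := by positivity
  have hnorm {M : Matrix ι ι ℂ} (hM : c • 1 ≤ M) {s : ℝ} (hs : 0 ≤ s) (k l : ι) :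
      ‖(M + s • 1)⁻¹ k l‖ ≤ (c + s)⁻¹ :=
    norm_inv_apply_le_of_smul_one_le (hpos hs) (smul_one_add_le_add_smul_one hM s) k l
  have hcont {M : Matrix ι ι ℂ} (hM : c • 1 ≤ M) {s : ℝ} (hs : 0 ≤ s) :
      ContinuousAt Inv.inv (M + s • 1) :=
    continuousAt_inv_of_isUnit
      (PosDef.of_smul_one_le (hpos hs) (smul_one_add_le_add_smul_one hM s)).isUnit
  have hentry {f : ℝ → Matrix ι ι ℂ} {x : ℝ} (hf : ContinuousAt f x) :
      ContinuousAt (fun y => f y i j) x :=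
    (continuous_id.matrix_elem i j).continuousAt.comp hf
  refine tendsto_integral_filter_of_dominated_convergence
    (fun s => (∑ k, ∑ l, ‖A k l‖) * ((c + s) * (c + s))⁻¹) ?_ ?_
    ((integrableOn_inv_mul_add_mul_add hc hc).const_mul _) ?_
  · filter_upwards [h] with t ht
    refine ContinuousOn.aestronglyMeasurable (fun s hs => ?_) measurableSet_Ioi
    have hs : 0 ≤ s := (Set.mem_Ioi.mp hs).le
    have hR {M : Matrix ι ι ℂ} (hM : c • 1 ≤ M) : ContinuousAt (fun s : ℝ => (M + s • 1)⁻¹) s :=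
      (hcont hM hs).comp (f := fun s : ℝ => M + s • 1) (by fun_prop)
    exact (hentry (((hR hB).mul continuousAt_const).mul (hR ht))).continuousWithinAt
  · filter_upwards [h] with t ht
    filter_upwards [ae_restrict_mem measurableSet_Ioi] with s hs
    have hs : 0 ≤ s := (Set.mem_Ioi.mp hs).le
    rw [mul_inv]
    exact norm_mul_mul_apply_le (hnorm hB hs) (hnorm ht hs) i j
  · filter_upwards [ae_restrict_mem measurableSet_Ioi] with s hs
    have hs : 0 ≤ s := (Set.mem_Ioi.mp hs).le
    have hR : ContinuousAt (fun t : ℝ => (B + t • A + s • 1)⁻¹) 0 :=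
      ContinuousAt.comp (f := fun t : ℝ => B + t • A + s • 1) (by simpa using hcont hB hs)
        (by fun_prop)
    simpa using (hentry (continuousAt_const.mul hR)).tendsto

lemma integral_inv_mul_mul_inv_apply {U A B C : Matrix ι ι ℂ} {b : ι → ℝ}
    (hU : U ∈ unitaryGroup ι ℂ) (hBU : B = U * diagonal (fun k => (b k : ℂ)) * star U)
    (hAU : A = U * C * star U) (hb : ∀ k, 0 < b k) (i j : ι) :
    ∫ s in Ioi (0 : ℝ), ((B + s • 1)⁻¹ * A * (B + s • 1)⁻¹) i j =
      (U * Matrix.of (fun k l => C k l * (logDD (b k) (b l) : ℂ)) * star U) i j := by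
  set M : ℝ → Matrix ι ι ℂ := fun s => Matrix.of fun k l => C k l * (((b k + s) * (b l + s))⁻¹ : ℝ)
  have hM (k l : ι) : IntegrableOn (fun s => M s k l) (Ioi 0) :=
    ((integrableOn_inv_mul_add_mul_add (hb k) (hb l)).ofReal).const_mul _
  have heq : Set.EqOn (fun s => (U * M s * star U) i j)
      (fun s : ℝ => ((B + s • 1)⁻¹ * A * (B + s • 1)⁻¹) i j) (Ioi 0) := fun s hs => by
    have hbs (k : ι) : (b k : ℂ) + s ≠ 0 := by
      exact_mod_cast (add_pos (hb k) (Set.mem_Ioi.mp hs)).ne'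
    have hmid : diagonal (fun k => ((b k : ℂ) + s)⁻¹) * C * diagonal (fun k => ((b k : ℂ) + s)⁻¹)
        = M s := by
      ext k l
      simp only [M, of_apply, diagonal_mul, mul_diagonal, mul_inv, Complex.ofReal_mul,
        Complex.ofReal_inv, Complex.ofReal_add]
      ring
    simp only
    rw [hBU, hAU, inv_mul_diagonal_mul_star_add_smul_one hU hbs, mul_mul_star_mul_mul_mul_star hU,
      mul_mul_star_mul_mul_mul_star hU, hmid]
  have hlim : Matrix.of (fun k l => ∫ s in Ioi (0 : ℝ), M s k l) =
      Matrix.of fun k l => C k l * (logDD (b k) (b l) : ℂ) := by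
    ext k l
    simp only [M, of_apply]
    rw [integral_const_mul, integral_complex_ofReal, integral_inv_mul_add_mul_add (hb k) (hb l)]
  rw [← setIntegral_congr_fun measurableSet_Ioi heq, integral_mul_mul_apply hM, hlim]

end

/-- if `U` is unitary, `U* B U = diag (b₁,…,bₙ)` and `U* A U = [c_{ij}]`, then the
Fréchet derivative of the matrix logarithm at the positive definite `B` in the direction of the
positive definite `A` equals `U [c_{ij} (log bᵢ - log bⱼ)/(bᵢ - bⱼ)] U*`. -/
theorem frechet_log_formula {n : ℕ} (A B : Matrix (Fin n) (Fin n) ℂ)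
    (hA : A.PosDef) (hB : B.PosDef) (U : Matrix (Fin n) (Fin n) ℂ)
    (hU : U ∈ Matrix.unitaryGroup (Fin n) ℂ) (b : Fin n → ℝ)
    (hdiag : star U * B * U = Matrix.diagonal (fun i => (b i : ℂ)))
    (C : Matrix (Fin n) (Fin n) ℂ) (hC : C = star U * A * U) :
    Tendsto (fun t : ℝ => t⁻¹ • (mlog (B + t • A) - mlog B)) (nhdsWithin 0 {0}ᶜ)
      (nhds (U * Matrix.of (fun i j => C i j * (logDD (b i) (b j) : ℂ)) * star U)) := by
  have hBU := eq_mul_mul_star_of_star_mul_mul_eq hU hdiag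
  have hAU := eq_mul_mul_star_of_star_mul_mul_eq hU hC.symm
  have hb := pos_of_star_mul_mul_eq_diagonal hU hB hdiag
  obtain ⟨δ, hδb, hδ⟩ := ((Filter.eventually_all.mpr fun k => eventually_le_nhds (hb k)).filter_mono
    nhdsWithin_le_nhds |>.and self_mem_nhdsWithin).exists (f := 𝓝[>] (0 : ℝ))
  have hsmall := eventually_smul_one_le_add_smul hA.1
    (hBU ▸ smul_one_le_mul_diagonal_mul_star hU hδb) (half_lt_self hδ)
  have hquot : ∀ᶠ t in 𝓝[≠] (0 : ℝ), ∀ i j, (t⁻¹ • (mlog (B + t • A) - mlog B)) i j =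
      ∫ s in Ioi (0 : ℝ), ((B + s • 1)⁻¹ * A * (B + t • A + s • 1)⁻¹) i j := by
    filter_upwards [self_mem_nhdsWithin, nhdsWithin_le_nhds hsmall] with t ht0 ht
    exact inv_smul_cfc_log_add_smul_sub_cfc_log_apply
      (PosDef.of_smul_one_le (half_pos hδ) ht) hB ht0
  refine tendsto_pi_nhds.mpr fun i => tendsto_pi_nhds.mpr fun j => ?_
  rw [← integral_inv_mul_mul_inv_apply hU hBU hAU hb]
  exact ((tendsto_integral_inv_mul_mul_inv_apply (half_pos hδ) hsmall i j).mono_left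
    nhdsWithin_le_nhds).congr' (hquot.mono fun t ht => (ht i j).symm)
end

section
/- For a positive definite Hermitian matrix B and Hermitian matrix A, one has tr(B · Dlog[B](A)) = tr(A), and Dlog[B](B) = I_n. -/
open Matrix Filter
open scoped ComplexOrder

/-!
Write `Q t = t⁻¹ (log (B + t A) - log B)` for the difference quotient. Klein's inequality
`tr (X - Y) ≤ tr (X (log X - log Y))` for positive definite `X`, `Y`, applied to the pairs
`(B, B + t A)` and `(B + t A, B)`, gives for small `t > 0`
`re tr (B Q t) ≤ re tr A ≤ re tr ((B + t A) Q t)`, and both bounds tend to `re tr (B D)`.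
The imaginary parts vanish because `A`, `B` and `D` are Hermitian.

Klein's inequality itself becomes, in eigenbases `(uᵢ)` of `X` and `(vⱼ)` of `Y`, the scalar
inequality `x - y ≤ x (log x - log y)` summed with the weights `|⟪uᵢ, vⱼ⟫|² ≥ 0`.

The second claim is the homogeneity `log ((1 + t) B) = log (1 + t) • 1 + log B`.
-/

open Topology

theorem Real.sub_le_mul_sub_log {x y : ℝ} (hx : 0 < x) (hy : 0 < y) :
    x - y ≤ x * (Real.log x - Real.log y) := by
  have h := Real.log_le_sub_one_of_pos (div_pos hy hx)
  rw [Real.log_div hy.ne' hx.ne', le_sub_iff_add_le, le_div_iff₀ hx] at h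
  linarith

namespace Matrix

variable {ι 𝕜 : Type*} [Fintype ι] [RCLike 𝕜]

theorem IsHermitian.im_trace_mul {M N : Matrix ι ι 𝕜} (hM : M.IsHermitian)
    (hN : N.IsHermitian) : RCLike.im (M * N).trace = 0 := by
  rw [← RCLike.conj_eq_iff_im, ← RCLike.star_def, ← trace_conjTranspose, conjTranspose_mul,
    hM.eq, hN.eq, trace_mul_comm]

variable [DecidableEq ι]

theorem trace_diagonal_mul_mul_diagonal_mul_star (d e : ι → ℝ) (W : Matrix ι ι 𝕜) :
    (diagonal (RCLike.ofReal ∘ d) * W * diagonal (RCLike.ofReal ∘ e) * star W).trace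
      = ((∑ i, ∑ j, d i * e j * ‖W i j‖ ^ 2 : ℝ) : 𝕜) := by
  push_cast
  refine Finset.sum_congr rfl fun i _ => ?_
  rw [diag_apply, mul_apply]
  refine Finset.sum_congr rfl fun j _ => ?_
  rw [mul_diagonal, diagonal_mul, star_apply, RCLike.star_def, ← RCLike.conj_mul]
  simp only [Function.comp_apply]
  ring

theorem IsHermitian.trace_cfc_mul_cfc {X Y : Matrix ι ι 𝕜} (hX : X.IsHermitian)
    (hY : Y.IsHermitian) (f g : ℝ → ℝ) :
    (cfc f X * cfc g Y).trace =
      ((∑ i, ∑ j, f (hX.eigenvalues i) * g (hY.eigenvalues j) *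
        ‖(star (hX.eigenvectorUnitary : Matrix ι ι 𝕜) * hY.eigenvectorUnitary) i j‖ ^ 2 : ℝ) :
          𝕜) := by
  rw [← trace_diagonal_mul_mul_diagonal_mul_star, hX.cfc_eq, hY.cfc_eq, IsHermitian.cfc,
    IsHermitian.cfc, Unitary.conjStarAlgAut_apply, Unitary.conjStarAlgAut_apply, star_mul,
    star_star]
  simp only [Matrix.mul_assoc]
  rw [Matrix.trace_mul_comm]
  simp only [Matrix.mul_assoc, Function.comp_def]

theorem PosDef.re_trace_sub_le_re_trace_mul_log_sub_log {X Y : Matrix ι ι 𝕜} (hX : X.PosDef)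
    (hY : Y.PosDef) :
    RCLike.re (X - Y).trace ≤ RCLike.re (X * (cfc Real.log X - cfc Real.log Y)).trace := by
  have hXs : IsSelfAdjoint X := hX.isHermitian
  have hYs : IsSelfAdjoint Y := hY.isHermitian
  have hXX : X * cfc Real.log X = cfc (fun x => x * Real.log x) X * cfc (1 : ℝ → ℝ) Y := by
    rw [cfc_one ℝ Y, Matrix.mul_one, cfc_mul (fun x => x) Real.log X
      (hg := finite_real_spectrum.continuousOn _), cfc_id' ℝ X]
  have hXY : X * cfc Real.log Y = cfc (fun x : ℝ => x) X * cfc Real.log Y := by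
    rw [cfc_id' ℝ X]
  have hX1 : X = cfc (fun x : ℝ => x) X * cfc (1 : ℝ → ℝ) Y := by
    rw [cfc_one ℝ Y, Matrix.mul_one, cfc_id' ℝ X]
  have hY1 : Y = cfc (1 : ℝ → ℝ) X * cfc (fun x : ℝ => x) Y := by
    rw [cfc_one ℝ X, Matrix.one_mul, cfc_id' ℝ Y]
  rw [Matrix.mul_sub, trace_sub, trace_sub, map_sub, map_sub, hXX, hXY]
  nth_rewrite 1 [hX1]
  nth_rewrite 2 [hY1]
  simp only [hX.isHermitian.trace_cfc_mul_cfc hY.isHermitian, RCLike.ofReal_re,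
    ← Finset.sum_sub_distrib]
  refine Finset.sum_le_sum fun i _ => Finset.sum_le_sum fun j _ => ?_
  have := Real.sub_le_mul_sub_log (hX.eigenvalues_pos i) (hY.eigenvalues_pos j)
  simp only [Pi.one_apply]
  nlinarith [sq_nonneg ‖(star (hX.isHermitian.eigenvectorUnitary : Matrix ι ι 𝕜) *
    hY.isHermitian.eigenvectorUnitary) i j‖]

section MatrixOrder

open scoped MatrixOrder

theorem PosDef.eventually_posDef_add_smul {A B : Matrix ι ι 𝕜} (hB : B.PosDef)
    (hA : A.IsHermitian) : ∀ᶠ t : ℝ in 𝓝 0, (B + t • A).PosDef := by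
  obtain ⟨c, hcB, hc⟩ : ∃ c, (∀ x ∈ spectrum ℝ B, 2 * c ≤ x) ∧ 0 < c := by
    refine ((finite_real_spectrum.eventually_all.2 fun x hx => ?_).filter_mono
      nhdsWithin_le_nhds |>.and self_mem_nhdsWithin).exists (f := 𝓝[>] (0 : ℝ))
    have : Tendsto (fun c : ℝ => 2 * c) (𝓝 0) (𝓝 0) := by
      simpa using (continuous_const_mul (2 : ℝ)).tendsto 0
    exact (this.eventually (gt_mem_nhds (hB.isStrictlyPositive.spectrum_pos hx))).mono
      fun _ => le_of_lt
  have hA' : ∀ᶠ t : ℝ in 𝓝 0, ∀ x ∈ spectrum ℝ A, -c ≤ t * x := by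
    refine finite_real_spectrum.eventually_all.2 fun x _ => ?_
    have : Tendsto (fun t : ℝ => t * x) (𝓝 0) (𝓝 0) := by
      simpa using (continuous_mul_const x).tendsto 0
    exact (this.eventually (lt_mem_nhds (neg_lt_zero.2 hc))).mono fun _ => le_of_lt
  filter_upwards [hA'] with t ht
  have h1 : algebraMap ℝ _ (2 * c) ≤ B := algebraMap_le_of_le_spectrum hcB
  have h2 : algebraMap ℝ _ (-c) ≤ t • A := by
    rw [← cfc_const_mul_id t A]
    exact algebraMap_le_cfc _ _ A ht
  have h3 : (B + t • A - c • 1).PosSemidef := by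
    rw [← nonneg_iff_posSemidef, sub_nonneg, ← Algebra.algebraMap_eq_smul_one]
    calc algebraMap ℝ _ c = algebraMap ℝ _ (2 * c) + algebraMap ℝ _ (-c) := by
          rw [← map_add]; ring_nf
      _ ≤ B + t • A := add_le_add h1 h2
  simpa using (PosDef.one.smul hc).add_posSemidef h3

theorem PosDef.cfc_log_smul {B : Matrix ι ι 𝕜} (hB : B.PosDef) {r : ℝ} (hr : r ≠ 0) :
    cfc Real.log (r • B) = algebraMap ℝ _ (Real.log r) + cfc Real.log B := by
  rw [← cfc_smul_id (R := ℝ) r B, ← cfc_comp Real.log (r • ·) B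
    (hg := (finite_real_spectrum.image _).continuousOn _)]
  calc _ = cfc (fun z => Real.log r + Real.log z) B :=
        cfc_congr fun x hx => Real.log_mul hr (hB.isStrictlyPositive.spectrum_pos hx).ne'
    _ = _ := cfc_const_add _ _ _ (finite_real_spectrum.continuousOn _)

end MatrixOrder

theorem PosDef.re_trace_mul_le_of_smul_eq {A B Q : Matrix ι ι 𝕜} (hB : B.PosDef) {t : ℝ}
    (ht : 0 < t) (hBt : (B + t • A).PosDef)
    (hQ : t • Q = cfc Real.log (B + t • A) - cfc Real.log B) :
    RCLike.re (B * Q).trace ≤ RCLike.re A.trace := by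
  have h := hB.re_trace_sub_le_re_trace_mul_log_sub_log hBt
  rw [sub_add_cancel_left, ← neg_sub, ← hQ] at h
  simpa only [mul_neg, Matrix.mul_smul, trace_neg, trace_smul, map_neg, RCLike.smul_re,
    neg_le_neg_iff, mul_le_mul_iff_right₀ ht] using h

theorem PosDef.re_trace_le_of_smul_eq {A B Q : Matrix ι ι 𝕜} (hB : B.PosDef) {t : ℝ}
    (ht : 0 < t) (hBt : (B + t • A).PosDef)
    (hQ : t • Q = cfc Real.log (B + t • A) - cfc Real.log B) :
    RCLike.re A.trace ≤ RCLike.re ((B + t • A) * Q).trace := by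
  have h := hBt.re_trace_sub_le_re_trace_mul_log_sub_log hB
  rw [add_sub_cancel_left, ← hQ] at h
  simpa only [Matrix.mul_smul, trace_smul, RCLike.smul_re, mul_le_mul_iff_right₀ ht] using h

theorem PosDef.trace_mul_eq_of_tendsto_slope {A B D : Matrix ι ι 𝕜} (hA : A.IsHermitian)
    (hB : B.PosDef)
    (hD : Tendsto (fun t : ℝ => t⁻¹ • (cfc Real.log (B + t • A) - cfc Real.log B)) (𝓝[≠] 0)
      (𝓝 D)) :
    (B * D).trace = A.trace := by
  set Q := fun t : ℝ => t⁻¹ • (cfc Real.log (B + t • A) - cfc Real.log B)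
  have hDh : D.IsHermitian := (isClosed_eq continuous_star continuous_id).mem_of_tendsto hD
    (.of_forall fun t => IsSelfAdjoint.smul (.all _)
      (IsSelfAdjoint.sub (cfc_predicate _ _) (cfc_predicate _ _)))
  have hQ : Tendsto Q (𝓝[>] 0) (𝓝 D) := hD.mono_left (nhdsGT_le_nhdsNE 0)
  have hev : ∀ᶠ t in 𝓝[>] (0 : ℝ), 0 < t ∧ (B + t • A).PosDef ∧
      t • Q t = cfc Real.log (B + t • A) - cfc Real.log B :=
    (eventually_mem_nhdsWithin.and (nhdsWithin_le_nhds (hB.eventually_posDef_add_smul hA))).mono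
      fun t ⟨ht, hBt⟩ => ⟨ht, hBt, smul_inv_smul₀ (ne_of_gt ht) _⟩
  have hcont : Continuous fun M : Matrix ι ι 𝕜 => RCLike.re M.trace :=
    RCLike.continuous_re.comp continuous_id.matrix_trace
  have hup : Tendsto (fun t => RCLike.re (B * Q t).trace) (𝓝[>] 0)
      (𝓝 (RCLike.re (B * D).trace)) :=
    hcont.continuousAt.tendsto.comp (tendsto_const_nhds.mul hQ)
  have hlow : Tendsto (fun t => RCLike.re ((B + t • A) * Q t).trace) (𝓝[>] 0)
      (𝓝 (RCLike.re (B * D).trace)) := by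
    refine hcont.continuousAt.tendsto.comp ?_
    simpa using (tendsto_const_nhds.add ((tendsto_nhdsWithin_of_tendsto_nhds
      tendsto_id).smul_const A)).mul hQ
  have hre : RCLike.re (B * D).trace = RCLike.re A.trace := le_antisymm
    (le_of_tendsto hup <| hev.mono fun _ ⟨ht, hBt, hQt⟩ =>
      hB.re_trace_mul_le_of_smul_eq ht hBt hQt)
    (ge_of_tendsto hlow <| hev.mono fun _ ⟨ht, hBt, hQt⟩ => hB.re_trace_le_of_smul_eq ht hBt hQt)
  refine RCLike.ext hre ?_
  rw [hB.isHermitian.im_trace_mul hDh, ← A.one_mul, isHermitian_one.im_trace_mul hA]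

theorem PosDef.tendsto_slope_cfc_log_add_smul_self {B : Matrix ι ι 𝕜} (hB : B.PosDef) :
    Tendsto (fun t : ℝ => t⁻¹ • (cfc Real.log (B + t • B) - cfc Real.log B)) (𝓝[≠] 0)
      (𝓝 1) := by
  have hlog := (Real.hasDerivAt_log one_ne_zero).tendsto_slope_zero
  rw [inv_one] at hlog
  refine (one_smul ℝ (1 : Matrix ι ι 𝕜) ▸ hlog.smul_const (1 : Matrix ι ι 𝕜)).congr' ?_
  have : ∀ᶠ t : ℝ in 𝓝 0, 1 + t ≠ 0 :=
    (continuous_const.add continuous_id).continuousAt.eventually_ne (by norm_num)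
  filter_upwards [nhdsWithin_le_nhds this] with t ht
  rw [show B + t • B = (1 + t) • B by rw [add_smul, one_smul], hB.cfc_log_smul ht,
    Real.log_one, sub_zero, add_sub_cancel_right, Algebra.algebraMap_eq_smul_one, smul_assoc]

end Matrix

/-- for `B` positive definite Hermitian and `A` Hermitian, the Fréchet derivative
`Dlog[B](A)` of the matrix logarithm satisfies `tr (B ⬝ Dlog[B](A)) = tr A`, and
`Dlog[B](B) = I`. -/
theorem trace_frechet_log_and_id {n : ℕ} (A B D : Matrix (Fin n) (Fin n) ℂ)
    (hA : A.IsHermitian) (hB : B.PosDef)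
    (hD : Tendsto (fun t : ℝ => t⁻¹ • (mlog (B + t • A) - mlog B)) (nhdsWithin 0 {0}ᶜ)
      (nhds D)) :
    (B * D).trace = A.trace ∧
      Tendsto (fun t : ℝ => t⁻¹ • (mlog (B + t • B) - mlog B)) (nhdsWithin 0 {0}ᶜ)
        (nhds (1 : Matrix (Fin n) (Fin n) ℂ)) :=
  ⟨hB.trace_mul_eq_of_tendsto_slope hA hD, hB.tendsto_slope_cfc_log_add_smul_self⟩
end

section
/- Let A be self-adjoint, B positive semidefinite bounded operators on a Hilbert space with A² ≤ α²B² for some α > 0. Then the integral ∫_0^∞ B(B+xI)^{-1}A(B+xI)^{-1} dx converges in operator norm and its norm is at most α‖B‖. -/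
/-!
With `R x = (B + x)⁻¹`, the C⋆-identity turns `A² ≤ α²B²` into `‖A R x‖ ≤ α ‖B R x‖`, and the
functional calculus gives `‖B R x‖ ≤ ‖B‖ / (‖B‖ + x)`. Hence the integrand is dominated by
`α (‖B‖ / (‖B‖ + x))²`, whose integral over `(0, ∞)` is exactly `α ‖B‖`.
-/

open Filter MeasureTheory Set Topology

section CStarAlgebra

variable {E : Type*} [CStarAlgebra E] [PartialOrder E] [StarOrderedRing E]

lemma isStrictlyPositive_add_smul_one {b : E} (hb : 0 ≤ b) {x : ℝ} (hx : 0 < x) :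
    IsStrictlyPositive (b + x • (1 : E)) :=
  (isStrictlyPositive_one.smul hx).nonneg_add hb

lemma ringInverse_add_smul_one_eq_cfc {b : E} (hb : 0 ≤ b) {x : ℝ} (hx : 0 < x) :
    Ring.inverse (b + x • (1 : E)) = cfc (fun t : ℝ => (t + x)⁻¹) b := by
  have hne : ∀ t ∈ spectrum ℝ b, t + x ≠ 0 := fun t ht => by
    have := spectrum_nonneg_of_nonneg hb ht; positivity
  rw [cfc_inv _ _ hne, cfc_add _ _ _, cfc_id' ℝ b, cfc_const x b, Algebra.algebraMap_eq_smul_one]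

lemma norm_mul_ringInverse_add_smul_one_le {b : E} (hb : 0 ≤ b) {x : ℝ} (hx : 0 < x) :
    ‖b * Ring.inverse (b + x • (1 : E))‖ ≤ ‖b‖ / (‖b‖ + x) := by
  nontriviality E
  have hcont : ContinuousOn (fun t : ℝ => (t + x)⁻¹) (spectrum ℝ b) :=
    ContinuousOn.inv₀ (by fun_prop) fun t ht => (add_pos_of_nonneg_of_pos
      (spectrum_nonneg_of_nonneg hb ht) hx).ne'
  rw [ringInverse_add_smul_one_eq_cfc hb hx]
  nth_rw 1 [← cfc_id' ℝ b]
  rw [← cfc_mul _ _ b (by fun_prop) hcont]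
  refine norm_cfc_le (by positivity) fun t ht => ?_
  have h0 : 0 ≤ t := spectrum_nonneg_of_nonneg hb ht
  have h1 : t ≤ ‖b‖ := (Real.le_norm_self t).trans (spectrum.norm_le_norm_of_mem ht)
  rw [Real.norm_of_nonneg (by positivity), ← div_eq_mul_inv,
    div_le_div_iff₀ (by positivity) (by positivity)]
  nlinarith

lemma norm_mul_le_of_star_mul_self_le {a b : E} {α : ℝ} (hα : 0 ≤ α)
    (hab : star a * a ≤ (α ^ 2 : ℝ) • (star b * b)) (c : E) :
    ‖a * c‖ ≤ α * ‖b * c‖ := by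
  have key : star (a * c) * (a * c) ≤ (α ^ 2 : ℝ) • (star (b * c) * (b * c)) := by
    simpa only [star_mul, mul_assoc, mul_smul_comm, smul_mul_assoc]
      using star_left_conjugate_le_conjugate hab c
  have hsq : ‖a * c‖ ^ 2 ≤ (α * ‖b * c‖) ^ 2 := by
    have := CStarAlgebra.norm_le_norm_of_nonneg_of_le (star_mul_self_nonneg _) key
    rwa [norm_smul, CStarRing.norm_star_mul_self, CStarRing.norm_star_mul_self,
      Real.norm_of_nonneg (by positivity), ← sq, ← sq, ← mul_pow] at this
  exact (pow_le_pow_iff_left₀ (norm_nonneg _) (by positivity) two_ne_zero).mp hsq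

lemma norm_mul_ringInverse_mul_mul_ringInverse_le {a b : E} (ha : IsSelfAdjoint a) (hb : 0 ≤ b)
    {α : ℝ} (hα : 0 ≤ α) (hab : a * a ≤ (α ^ 2 : ℝ) • (b * b)) {x : ℝ} (hx : 0 < x) :
    ‖b * Ring.inverse (b + x • (1 : E)) * a * Ring.inverse (b + x • (1 : E))‖ ≤
      α * (‖b‖ / (‖b‖ + x)) ^ 2 := by
  set r := Ring.inverse (b + x • (1 : E))
  have hbr : ‖b * r‖ ≤ ‖b‖ / (‖b‖ + x) := norm_mul_ringInverse_add_smul_one_le hb hx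
  have har : ‖a * r‖ ≤ α * (‖b‖ / (‖b‖ + x)) :=
    (norm_mul_le_of_star_mul_self_le (b := b) hα (by rwa [ha.star_eq, hb.isSelfAdjoint.star_eq])
      r).trans (by gcongr)
  calc ‖b * r * a * r‖ = ‖(b * r) * (a * r)‖ := by rw [mul_assoc]
    _ ≤ ‖b * r‖ * ‖a * r‖ := norm_mul_le _ _
    _ ≤ ‖b‖ / (‖b‖ + x) * (α * (‖b‖ / (‖b‖ + x))) := by gcongr
    _ = α * (‖b‖ / (‖b‖ + x)) ^ 2 := by ring

lemma continuousOn_ringInverse_add_smul_one {b : E} (hb : 0 ≤ b) :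
    ContinuousOn (fun x : ℝ => Ring.inverse (b + x • (1 : E))) (Ioi 0) := fun x hx =>
  have hu := (isStrictlyPositive_add_smul_one hb hx).isUnit
  ((NormedRing.inverse_continuousAt hu.unit).comp_of_eq (f := fun y : ℝ => b + y • (1 : E))
    (by fun_prop) hu.unit_spec.symm).continuousWithinAt

end CStarAlgebra

lemma integrableOn_and_integral_Ioi_div_add_sq {c : ℝ} (hc : 0 ≤ c) :
    IntegrableOn (fun x : ℝ => (c / (c + x)) ^ 2) (Ioi 0) ∧
      ∫ x in Ioi (0 : ℝ), (c / (c + x)) ^ 2 = c := by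
  rcases hc.eq_or_lt with rfl | hc
  · simp
  have hderiv : ∀ x ∈ Ici (0 : ℝ), HasDerivAt (fun y => -c ^ 2 * (c + y)⁻¹)
      ((c / (c + x)) ^ 2) x := fun x hx => by
    have hcx : c + x ≠ 0 := by rw [mem_Ici] at hx; positivity
    exact (((hasDerivAt_id x).const_add c).inv hcx).const_mul (-c ^ 2) |>.congr_deriv
      (by rw [id]; field_simp)
  have hpos : ∀ x ∈ Ioi (0 : ℝ), 0 ≤ (c / (c + x)) ^ 2 := fun x _ => by positivity
  have hlim : Tendsto (fun y => -c ^ 2 * (c + y)⁻¹) atTop (𝓝 0) := by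
    simpa using (tendsto_inv_atTop_zero.comp
      (tendsto_atTop_add_const_left _ c tendsto_id)).const_mul (-c ^ 2)
  refine ⟨integrableOn_Ioi_deriv_of_nonneg' hderiv hpos hlim, ?_⟩
  rw [integral_Ioi_of_hasDerivAt_of_nonneg' hderiv hpos hlim]
  field_simp
  ring

lemma tendsto_setIntegral_Ioc_atTop {F : Type*} [NormedAddCommGroup F] [NormedSpace ℝ F]
    {f : ℝ → F} {a : ℝ} (hf : IntegrableOn f (Ioi a)) :
    Tendsto (fun t => ∫ x in Ioc a t, f x) atTop (𝓝 (∫ x in Ioi a, f x)) :=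
  (intervalIntegral_tendsto_integral_Ioi a hf tendsto_id).congr'
    ((eventually_ge_atTop a).mono fun t ht => intervalIntegral.integral_of_le ht)

/-- for `A` self-adjoint and `B ≥ 0` bounded with `A² ≤ α²B²` for some `α > 0`,
the integral `∫_0^∞ B(B+xI)⁻¹A(B+xI)⁻¹ dx` converges in operator norm and its norm is at most
`α‖B‖`. -/
theorem BDlog_integral_converges {H : Type*} [NormedAddCommGroup H] [InnerProductSpace ℂ H]
    [CompleteSpace H] (A B : H →L[ℂ] H) (hA : IsSelfAdjoint A) (hB : 0 ≤ B)
    (α : ℝ) (hα : 0 < α) (hAB : A * A ≤ (α ^ 2 : ℝ) • (B * B)) :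
    ∃ F : H →L[ℂ] H,
      Tendsto (fun t : ℝ => ∫ x in Set.Ioc (0 : ℝ) t,
          B * Ring.inverse (B + (x : ℝ) • (1 : H →L[ℂ] H)) * A *
            Ring.inverse (B + (x : ℝ) • (1 : H →L[ℂ] H)))
        atTop (nhds F) ∧ ‖F‖ ≤ α * ‖B‖ := by
  set f : ℝ → H →L[ℂ] H := fun x =>
    B * Ring.inverse (B + x • (1 : H →L[ℂ] H)) * A * Ring.inverse (B + x • (1 : H →L[ℂ] H))
  obtain ⟨hg, hg_integral⟩ := integrableOn_and_integral_Ioi_div_add_sq (norm_nonneg B)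
  have hbound : ∀ᵐ x ∂volume.restrict (Ioi (0 : ℝ)), ‖f x‖ ≤ α * (‖B‖ / (‖B‖ + x)) ^ 2 :=
    ae_restrict_of_forall_mem measurableSet_Ioi fun x hx =>
      norm_mul_ringInverse_mul_mul_ringInverse_le hA hB hα.le hAB hx
  have hcont := continuousOn_ringInverse_add_smul_one hB
  have hf : IntegrableOn f (Ioi 0) :=
    (hg.const_mul α).mono' (((continuousOn_const.mul hcont).mul continuousOn_const).mul
      hcont |>.aestronglyMeasurable measurableSet_Ioi) hbound
  refine ⟨_, tendsto_setIntegral_Ioc_atTop hf, ?_⟩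
  calc ‖∫ x in Ioi 0, f x‖ ≤ ∫ x in Ioi (0 : ℝ), α * (‖B‖ / (‖B‖ + x)) ^ 2 :=
        norm_integral_le_of_norm_le (hg.const_mul α) hbound
    _ = α * ‖B‖ := by rw [integral_const_mul, hg_integral]
end
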